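/- Let (λ_n) and (μ_m) be two strictly increasing sequences of distinct positive reals, and (a_n), (b_m) summable sequences of nonzero reals such that Σ_n a_n/(ζ + λ_n) = Σ_m b_m/(ζ + μ_m) for all ζ in ℂ minus the poles. Then for every n there exists m with λ_n = μ_m and a_n = b_m. -/

import Mathlib

/-!
Approach the pole `-λ` vertically: at `ζ = -λ + iε` (never a pole, as `ε ≠ 0`), the series
multiplied by `iε` equals `∑ a_k · iε/((λ_k - λ) + iε)`. Each term has modulus at most `|a_k|`
and tends to `a_k` if `λ_k = λ` and to `0` otherwise, so by dominated convergence the limit as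
`ε → 0⁺` is the coefficient at `λ`. Comparing these limits for the two series gives the claim.
-/

open Complex Filter Topology Function

lemma norm_mul_I_div_add_mul_I_le_one (c ε : ℝ) : ‖(ε * I : ℂ) / (c + ε * I)‖ ≤ 1 := by
  by_cases hz : (c + ε * I : ℂ) = 0
  · simp [hz]
  rw [norm_div, div_le_one (norm_pos_iff.mpr hz)]
  calc ‖(ε * I : ℂ)‖ = |(c + ε * I : ℂ).im| := by simp
    _ ≤ ‖(c + ε * I : ℂ)‖ := abs_im_le_norm _

lemma tendsto_mul_I_div_add_mul_I (c : ℝ) :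
    Tendsto (fun ε : ℝ => (ε * I : ℂ) / (c + ε * I)) (𝓝[>] 0) (𝓝 (if c = 0 then 1 else 0)) := by
  by_cases hc : c = 0
  · refine tendsto_const_nhds.congr' ?_
    filter_upwards [self_mem_nhdsWithin] with ε (hε : 0 < ε)
    simp [hc, hε.ne']
  · have hcont : ContinuousAt (fun ε : ℝ => (ε * I : ℂ) / (c + ε * I)) 0 :=
      ContinuousAt.div (by fun_prop) (by fun_prop) (by simpa using hc)
    simpa [hc] using hcont.tendsto.mono_left nhdsWithin_le_nhds

lemma tendsto_tsum_mul_mul_I_div_add_mul_I {ι : Type*} (a : ι → ℂ) (c : ι → ℝ)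
    (ha : Summable fun k => ‖a k‖) :
    Tendsto (fun ε : ℝ => ∑' k, a k * ((ε * I : ℂ) / (c k + ε * I))) (𝓝[>] 0)
      (𝓝 (∑' k, if c k = 0 then a k else 0)) := by
  refine tendsto_tsum_of_dominated_convergence ha (fun k => ?_) (Eventually.of_forall ?_)
  · simpa [mul_ite] using (tendsto_mul_I_div_add_mul_I (c k)).const_mul (a k)
  · intro ε k
    rw [norm_mul]
    exact mul_le_of_le_one_right (norm_nonneg _) (norm_mul_I_div_add_mul_I_le_one _ _)

lemma tendsto_mul_I_mul_tsum_div_add {ι : Type*} (a : ι → ℂ) (lam : ι → ℝ)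
    (ha : Summable fun k => ‖a k‖) (x : ℝ) :
    Tendsto (fun ε : ℝ => (ε * I : ℂ) * ∑' k, a k / ((-x + ε * I) + lam k)) (𝓝[>] 0)
      (𝓝 (∑' k, if lam k = x then a k else 0)) := by
  have h := tendsto_tsum_mul_mul_I_div_add_mul_I a (fun k => lam k - x) ha
  simp only [sub_eq_zero] at h
  refine h.congr fun ε => ?_
  rw [← tsum_mul_left]
  congr 1 with k
  push_cast
  ring

lemma neg_add_mul_I_ne_neg {x ε : ℝ} (hε : ε ≠ 0) (c : ℝ) : (-x + ε * I : ℂ) ≠ -(c : ℂ) :=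
  fun h => hε (by simpa using congrArg im h)

lemma tsum_ite_comp_eq_of_injective {ι M : Type*} [AddCommMonoid M] [TopologicalSpace M]
    {lam : ι → ℝ} (hlam : Injective lam) (a : ι → M) (k₀ : ι) :
    ∑' k, (if lam k = lam k₀ then a k else 0) = a k₀ := by
  rw [tsum_eq_single k₀ fun k hk => if_neg (hlam.ne hk), if_pos rfl]

theorem pole_residue_matching_general
    (lam mu : ℕ → ℝ) (hlam : StrictMono lam) (hmu : StrictMono mu)
    (a b : ℕ → ℝ) (ha : Summable a) (hb : Summable b)
    (hane : ∀ n, a n ≠ 0)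
    (heq : ∀ ζ : ℂ, (∀ n, ζ ≠ -(lam n : ℂ)) → (∀ m, ζ ≠ -(mu m : ℂ)) →
      (∑' n : ℕ, (a n : ℂ) / (ζ + (lam n : ℂ)))
        = ∑' m : ℕ, (b m : ℂ) / (ζ + (mu m : ℂ))) :
    ∀ n : ℕ, ∃ m : ℕ, lam n = mu m ∧ a n = b m := by
  intro n
  have hres : (a n : ℂ) = ∑' m, if mu m = lam n then (b m : ℂ) else 0 := by
    rw [← tsum_ite_comp_eq_of_injective hlam.injective (fun k => (a k : ℂ)) n]
    refine tendsto_nhds_unique ?_ (tendsto_mul_I_mul_tsum_div_add _ mu (by simpa using hb.abs) _)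
    refine (tendsto_mul_I_mul_tsum_div_add _ lam (by simpa using ha.abs) _).congr' ?_
    filter_upwards [self_mem_nhdsWithin] with ε (hε : 0 < ε)
    rw [heq _ (neg_add_mul_I_ne_neg hε.ne' <| lam ·) (neg_add_mul_I_ne_neg hε.ne' <| mu ·)]
  by_cases hpole : ∃ m, mu m = lam n
  · obtain ⟨m, hm⟩ := hpole
    rw [← hm, tsum_ite_comp_eq_of_injective hmu.injective] at hres
    exact ⟨m, hm.symm, mod_cast hres⟩
  · push Not at hpole
    simp [hpole, hane n] at hres

/-- Matching of poles and residues: if two series of simple fractions with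
summable nonzero coefficients agree away from the poles, then every pole of
the first appears among the poles of the second with the same coefficient. -/
theorem pole_residue_matching
    (lam mu : ℕ → ℝ) (hlam : StrictMono lam) (hmu : StrictMono mu)
    (hlampos : ∀ n, 0 < lam n) (hmupos : ∀ m, 0 < mu m)
    (a b : ℕ → ℝ) (ha : Summable a) (hb : Summable b)
    (hane : ∀ n, a n ≠ 0) (hbne : ∀ m, b m ≠ 0)
    (heq : ∀ ζ : ℂ, (∀ n, ζ ≠ -(lam n : ℂ)) → (∀ m, ζ ≠ -(mu m : ℂ)) →
      (∑' n : ℕ, (a n : ℂ) / (ζ + (lam n : ℂ)))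
        = ∑' m : ℕ, (b m : ℂ) / (ζ + (mu m : ℂ))) :
    ∀ n : ℕ, ∃ m : ℕ, lam n = mu m ∧ a n = b m :=
  pole_residue_matching_general lam mu hlam hmu a b ha hb hane heq
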